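/- arXiv:1411.3086 — 10 statements merged into one kernel-verified Lean document; each statement's English description precedes it below -/
import Mathlib

section
/- Let 𝕂 be ℝ or ℂ, let X be a 𝕂-Hilbert space, and let (b_i)_{i∈ι} be a Hilbert basis of X. Then for all ξ, η ∈ X the family i ↦ ⟨b_i, ξ⟩·⟨b_i, η⟩ • b_i is summable in X, and its sum ξ * η satisfies ‖ξ * η‖ ≤ ‖ξ‖ · ‖η‖. -/
/-!
The coefficient sequences of `ξ` and `η` lie in `ℓ²`, and `ℓ²` is closed under pointwise
multiplication with `‖f g‖₂ ≤ ‖f‖_∞ ‖g‖₂ ≤ ‖f‖₂ ‖g‖₂`. So `ξ * η` is the image under the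
isometry `ℓ² ≃ X` of the product of the coefficient sequences, and Parseval gives the bound.
-/

open scoped ENNReal

namespace lp

variable {α : Type*} {B : α → Type*} [∀ i, NormedRing (B i)] {p : ℝ≥0∞}

theorem norm_apply_mul_le (hp : p ≠ 0) (f g : lp B p) (i : α) : ‖f i * g i‖ ≤ ‖f‖ * ‖g i‖ :=
  (norm_mul_le _ _).trans <| by gcongr; exact norm_apply_le_norm hp f i

theorem memℓp_mul (hp : p ≠ 0) (f g : lp B p) : Memℓp (⇑f * ⇑g) p :=
  ((lp.memℓp g).norm.const_mul ‖f‖).mono (norm_apply_mul_le hp f g)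

variable [Fact (1 ≤ p)]

def pointwiseMul (f g : lp B p) : lp B p :=
  ⟨⇑f * ⇑g, memℓp_mul (zero_lt_one.trans_le Fact.out).ne' f g⟩

@[simp]
theorem coeFn_pointwiseMul (f g : lp B p) : ⇑(pointwiseMul f g) = ⇑f * ⇑g :=
  rfl

theorem norm_pointwiseMul_le (f g : lp B p) : ‖pointwiseMul f g‖ ≤ ‖f‖ * ‖g‖ := by
  have hp : p ≠ 0 := (zero_lt_one.trans_le Fact.out).ne'
  let gNorm : lp (fun _ : α => ℝ) p := ⟨fun i => ‖g i‖, (lp.memℓp g).norm⟩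
  calc ‖pointwiseMul f g‖ ≤ ‖‖f‖ • gNorm‖ :=
        norm_mono hp fun i => by
          simpa [gNorm, abs_of_nonneg (norm_nonneg _)] using norm_apply_mul_le hp f g i
    _ ≤ ‖‖f‖‖ * ‖gNorm‖ := norm_const_smul_le hp _ _
    _ ≤ ‖f‖ * ‖g‖ := by
        rw [norm_norm]
        gcongr
        exact norm_mono hp fun i => by simp [gNorm]

end lp

theorem HilbertBasis.hasSum_inner_mul_inner_smul {𝕜 : Type*} [RCLike 𝕜] {X : Type*}
    [NormedAddCommGroup X] [InnerProductSpace 𝕜 X] {ι : Type*} (b : HilbertBasis ι 𝕜 X)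
    (ξ η : X) :
    HasSum (fun i => (inner 𝕜 (b i) ξ * inner 𝕜 (b i) η) • b i)
      (b.repr.symm (lp.pointwiseMul (b.repr ξ) (b.repr η))) := by
  simpa [b.repr_apply_apply] using b.hasSum_repr_symm (lp.pointwiseMul (b.repr ξ) (b.repr η))

theorem stmt_0_general {𝕜 : Type*} [RCLike 𝕜] {X : Type*} [NormedAddCommGroup X]
    [InnerProductSpace 𝕜 X] {ι : Type*}
    (b : HilbertBasis ι 𝕜 X) (ξ η : X) :
    Summable (fun i : ι => ((inner 𝕜 (b i) ξ : 𝕜) * (inner 𝕜 (b i) η : 𝕜)) • b i) ∧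
      ‖∑' i : ι, ((inner 𝕜 (b i) ξ : 𝕜) * (inner 𝕜 (b i) η : 𝕜)) • b i‖ ≤ ‖ξ‖ * ‖η‖ := by
  have hsum := b.hasSum_inner_mul_inner_smul ξ η
  refine ⟨hsum.summable, ?_⟩
  calc ‖∑' i, (inner 𝕜 (b i) ξ * inner 𝕜 (b i) η) • b i‖
      = ‖lp.pointwiseMul (b.repr ξ) (b.repr η)‖ := by rw [hsum.tsum_eq, b.repr.symm.norm_map]
    _ ≤ ‖b.repr ξ‖ * ‖b.repr η‖ := lp.norm_pointwiseMul_le _ _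
    _ = ‖ξ‖ * ‖η‖ := by rw [b.repr.norm_map, b.repr.norm_map]

/-- For a Hilbert basis `b` of a `𝕜`-Hilbert space `X` (`𝕜 = ℝ` or `ℂ`),
the family `i ↦ ⟨b i, ξ⟩⟨b i, η⟩ • b i` is summable and the norm of its sum
(the abstract convolution `ξ * η`) is at most `‖ξ‖ * ‖η‖`. -/
theorem stmt_0 {𝕜 : Type*} [RCLike 𝕜] {X : Type*} [NormedAddCommGroup X]
    [InnerProductSpace 𝕜 X] [CompleteSpace X] {ι : Type*}
    (b : HilbertBasis ι 𝕜 X) (ξ η : X) :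
    Summable (fun i : ι => ((inner 𝕜 (b i) ξ : 𝕜) * (inner 𝕜 (b i) η : 𝕜)) • b i) ∧
      ‖∑' i : ι, ((inner 𝕜 (b i) ξ : 𝕜) * (inner 𝕜 (b i) η : 𝕜)) • b i‖ ≤ ‖ξ‖ * ‖η‖ :=
  stmt_0_general b ξ η
end

section
/- Let 𝕂 be ℝ or ℂ, let X be a 𝕂-Hilbert space with Hilbert basis (b_i)_{i∈ι}, and fix ξ ∈ X. Let T : X → X be a continuous linear map satisfying T η = ∑'_{i∈ι} ⟨b_i, ξ⟩·⟨b_i, η⟩ • b_i for every η ∈ X. Then T(b_i) = ⟨b_i, ξ⟩ • b_i for every i, the family i ↦ ‖T(b_i)‖² is summable (i.e., T is Hilbert–Schmidt with respect to this basis), and T is a compact operator. -/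
/-!
Since `T (b i) = ⟪b i, ξ⟫ • b i`, Bessel's inequality for `ξ` makes `T` Hilbert–Schmidt. A
Hilbert–Schmidt operator is the norm limit of its finite-rank truncations
`η ↦ ∑ i ∈ s, ⟪b i, η⟫ • T (b i)`: by Cauchy–Schwarz and Bessel's inequality for `η`, the
truncation error is at most `(∑ i ∉ s, ‖T (b i)‖ ^ 2) ^ (1/2) * ‖η‖`. Norm limits of compact
operators are compact.
-/

open Filter Topology

section

variable {𝕜 X Y ι : Type*} [RCLike 𝕜] [NormedAddCommGroup X] [NormedAddCommGroup Y]
  [NormedSpace 𝕜 Y]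

theorem ContinuousLinearMap.isCompactOperator_smulRight [NormedSpace 𝕜 X]
    (φ : X →L[𝕜] 𝕜) (v : Y) : IsCompactOperator (φ.smulRight v) :=
  (isCompactOperator_of_locallyCompactSpace_dom φ).clm_comp
    ((ContinuousLinearMap.id 𝕜 𝕜).smulRight v)

variable [InnerProductSpace 𝕜 X]

theorem Orthonormal.tsum_mul_inner_smul_self {v : ι → X} (hv : Orthonormal 𝕜 v)
    (c : ι → 𝕜) (i : ι) : ∑' j, (c j * inner 𝕜 (v j) (v i)) • v j = c i • v i := by
  rw [tsum_eq_single i fun j hj => by rw [hv.inner_eq_zero hj, mul_zero, zero_smul],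
    inner_self_eq_one_of_norm_eq_one (hv.1 i), mul_one]

theorem Orthonormal.norm_sum_inner_smul_le {v : ι → X} (hv : Orthonormal 𝕜 v) (w : ι → Y)
    (s : Finset ι) (x : X) :
    ‖∑ i ∈ s, inner 𝕜 (v i) x • w i‖ ≤ √(∑ i ∈ s, ‖w i‖ ^ 2) * ‖x‖ :=
  calc ‖∑ i ∈ s, inner 𝕜 (v i) x • w i‖
      ≤ ∑ i ∈ s, ‖inner 𝕜 (v i) x‖ * ‖w i‖ :=
        norm_sum_le_of_le _ fun i _ => norm_smul_le _ _
    _ ≤ √(∑ i ∈ s, ‖inner 𝕜 (v i) x‖ ^ 2) * √(∑ i ∈ s, ‖w i‖ ^ 2) :=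
        Real.sum_mul_le_sqrt_mul_sqrt _ _ _
    _ ≤ ‖x‖ * √(∑ i ∈ s, ‖w i‖ ^ 2) := by
        gcongr
        exact Real.sqrt_le_iff.mpr ⟨norm_nonneg x, hv.sum_inner_products_le x⟩
    _ = √(∑ i ∈ s, ‖w i‖ ^ 2) * ‖x‖ := mul_comm _ _

namespace HilbertBasis

variable (b : HilbertBasis ι 𝕜 X) {T : X →L[𝕜] Y}

theorem norm_apply_sub_sum_le (hT : Summable fun i => ‖T (b i)‖ ^ 2) (s : Finset ι)
    (x : X) :
    ‖T x - ∑ i ∈ s, inner 𝕜 (b i) x • T (b i)‖ ≤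
      √(∑' i, ‖T (b i)‖ ^ 2 - ∑ i ∈ s, ‖T (b i)‖ ^ 2) * ‖x‖ := by
  have hTx : HasSum (fun i => inner 𝕜 (b i) x • T (b i)) (T x) := by
    simpa only [map_smul, b.repr_apply_apply] using (b.hasSum_repr x).mapL T
  refine le_of_tendsto (hTx.sub_const _).norm ?_
  filter_upwards [eventually_ge_atTop s] with t hst
  classical
  rw [← Finset.sum_sdiff hst, add_sub_cancel_right]
  refine (b.orthonormal.norm_sum_inner_smul_le _ _ x).trans ?_
  gcongr
  rw [le_sub_iff_add_le, Finset.sum_sdiff hst]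
  exact hT.sum_le_tsum t fun _ _ => by positivity

theorem isCompactOperator_of_summable_norm_sq [CompleteSpace Y]
    (hT : Summable fun i => ‖T (b i)‖ ^ 2) : IsCompactOperator T := by
  set F : Finset ι → X →L[𝕜] Y := fun s => ∑ i ∈ s, (innerSL 𝕜 (b i)).smulRight (T (b i))
  have hF : ∀ s, IsCompactOperator (F s) := fun s =>
    Submodule.sum_mem (compactOperator _ X Y) fun i _ =>
      (innerSL 𝕜 (b i)).isCompactOperator_smulRight _
  have htail :
      Tendsto (fun s => √(∑' i, ‖T (b i)‖ ^ 2 - ∑ i ∈ s, ‖T (b i)‖ ^ 2)) atTop (𝓝 0) := by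
    have := ((tendsto_const_nhds (x := ∑' i, ‖T (b i)‖ ^ 2)).sub hT.hasSum).sqrt
    rwa [sub_self, Real.sqrt_zero] at this
  refine isCompactOperator_of_tendsto (l := atTop) ?_ (Eventually.of_forall hF)
  rw [tendsto_iff_norm_sub_tendsto_zero]
  refine squeeze_zero (fun _ => norm_nonneg _) (fun s => ?_) htail
  rw [norm_sub_rev]
  refine ContinuousLinearMap.opNorm_le_bound _ (Real.sqrt_nonneg _) fun x => ?_
  simpa only [F, sub_apply, sum_apply, ContinuousLinearMap.smulRight_apply, coe_innerSL_apply] using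
    b.norm_apply_sub_sum_le hT s x

end HilbertBasis

end

/-- If `T` is a continuous linear operator on a Hilbert space given by
`T η = ∑' i, ⟨b i, ξ⟩⟨b i, η⟩ • b i` for a Hilbert basis `b` and fixed `ξ`, then
`T (b i) = ⟨b i, ξ⟩ • b i` for each `i`, `T` is Hilbert–Schmidt with respect to `b`
(the family `i ↦ ‖T (b i)‖²` is summable), and `T` is a compact operator. -/
theorem stmt_2 {𝕜 : Type*} [RCLike 𝕜] {X : Type*} [NormedAddCommGroup X]
    [InnerProductSpace 𝕜 X] [CompleteSpace X] {ι : Type*}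
    (b : HilbertBasis ι 𝕜 X) (ξ : X) (T : X →L[𝕜] X)
    (hT : ∀ η : X, T η = ∑' i : ι, ((inner 𝕜 (b i) ξ : 𝕜) * (inner 𝕜 (b i) η : 𝕜)) • b i) :
    (∀ i : ι, T (b i) = (inner 𝕜 (b i) ξ : 𝕜) • b i) ∧
      Summable (fun i : ι => ‖T (b i)‖ ^ 2) ∧
      IsCompactOperator T := by
  have hTb : ∀ i, T (b i) = inner 𝕜 (b i) ξ • b i := fun i => by
    rw [hT, b.orthonormal.tsum_mul_inner_smul_self]
  have hHS : Summable fun i => ‖T (b i)‖ ^ 2 := by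
    refine (b.orthonormal.inner_products_summable ξ).congr fun i => ?_
    rw [hTb, norm_smul, b.orthonormal.norm_eq_one, mul_one]
  exact ⟨hTb, hHS, b.isCompactOperator_of_summable_norm_sq hHS⟩
end

section
/- Let X be a complex Hilbert space with Hilbert basis (b_i)_{i∈ι}, let μ : ι → ℂ be a bounded function, and let T : X → X be a continuous linear map satisfying T η = ∑'_{i∈ι} μ(i)·⟨b_i, η⟩ • b_i for every η ∈ X. Then the spectrum of T equals the closure of the range of μ: spectrum(T) = closure {μ(i) : i ∈ ι}. -/
/-!
Through the basis `b`, `T` becomes multiplication by `μ` on `ℓ²`, i.e. the image of `μ` under an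
algebra homomorphism `ℓ^∞ → B(X)`. Hence the spectrum of `T` lies in the spectrum of `μ` in
`ℓ^∞`, which lies in the closure of the range of `μ`: if `z` stays at distance `ε > 0` from every
`μ i`, then `(z - μ i)⁻¹` is bounded by `ε⁻¹`. Conversely every `μ i` is an eigenvalue, with
eigenvector `b i`, and the spectrum is closed.
-/

open scoped ENNReal lp InnerProductSpace

namespace lp

variable {ι 𝕜 : Type*} [NormedField 𝕜]

@[simp]
theorem infty_algebraMap_apply (z : 𝕜) (i : ι) : algebraMap 𝕜 ℓ^∞(ι, 𝕜) z i = z := rfl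

theorem isUnit_infty_of_le_norm {ν : ℓ^∞(ι, 𝕜)} {ε : ℝ} (hε : 0 < ε) (hν : ∀ i, ε ≤ ‖ν i‖) :
    IsUnit ν := by
  have hν₀ (i : ι) : ν i ≠ 0 := norm_pos_iff.mp (hε.trans_le (hν i))
  have hinv : Memℓp (fun i => (ν i)⁻¹) ∞ := memℓp_infty ⟨ε⁻¹, by
    rintro _ ⟨i, rfl⟩
    simpa only [norm_inv] using inv_anti₀ hε (hν i)⟩
  refine IsUnit.of_mul_eq_one ⟨_, hinv⟩ (lp.ext (funext fun i => ?_))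
  simp [infty_coeFn_mul, hν₀ i]

theorem spectrum_infty_subset_closure_range (ν : ℓ^∞(ι, 𝕜)) :
    spectrum 𝕜 ν ⊆ closure (Set.range ν) := by
  intro z hz
  by_contra hzν
  obtain ⟨ε, hε, hball⟩ : ∃ ε > 0, ∀ i, ε ≤ dist z (ν i) := by
    simpa [Metric.mem_closure_iff] using hzν
  exact hz (isUnit_infty_of_le_norm hε fun i => by simpa [dist_eq_norm] using hball i)

variable {p : ℝ≥0∞}

theorem norm_infty_mul_apply_le (ν : ℓ^∞(ι, 𝕜)) (f : ℓ^p(ι, 𝕜)) (i : ι) :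
    ‖ν i * f i‖ ≤ ‖ν‖ * ‖f i‖ := by
  rw [norm_mul]
  gcongr
  exact norm_apply_le_norm ENNReal.top_ne_zero ν i

theorem memℓp_infty_mul (ν : ℓ^∞(ι, 𝕜)) (f : ℓ^p(ι, 𝕜)) : Memℓp (fun i => ν i * f i) p :=
  ((lp.memℓp f).norm.const_mul ‖ν‖).mono (norm_infty_mul_apply_le ν f)

variable [Fact (1 ≤ p)]

theorem norm_infty_mul_le (ν : ℓ^∞(ι, 𝕜)) (f : ℓ^p(ι, 𝕜)) :
    ‖(⟨fun i => ν i * f i, memℓp_infty_mul ν f⟩ : ℓ^p(ι, 𝕜))‖ ≤ ‖ν‖ * ‖f‖ := by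
  calc _ ≤ ‖‖ν‖ • toNorm f‖ := norm_mono (zero_lt_one.trans_le Fact.out).ne' fun i => by
          simpa [toNorm, abs_of_nonneg (norm_nonneg ν)] using norm_infty_mul_apply_le ν f i
    _ = ‖ν‖ * ‖f‖ := by rw [norm_smul, norm_norm, norm_toNorm]

variable (p) in
noncomputable def mulCLM (ν : ℓ^∞(ι, 𝕜)) : ℓ^p(ι, 𝕜) →L[𝕜] ℓ^p(ι, 𝕜) :=
  LinearMap.mkContinuous
    { toFun f := ⟨fun i => ν i * f i, memℓp_infty_mul ν f⟩
      map_add' f g := by ext i; exact mul_add (ν i) (f i) (g i)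
      map_smul' c f := by ext i; simp [mul_left_comm] } ‖ν‖ (norm_infty_mul_le ν)

@[simp]
theorem mulCLM_apply_apply (ν : ℓ^∞(ι, 𝕜)) (f : ℓ^p(ι, 𝕜)) (i : ι) :
    mulCLM p ν f i = ν i * f i := rfl

variable (ι 𝕜 p) in
noncomputable def mulAlgHom : ℓ^∞(ι, 𝕜) →ₐ[𝕜] (ℓ^p(ι, 𝕜) →L[𝕜] ℓ^p(ι, 𝕜)) where
  toFun := mulCLM p
  map_one' := by ext; simp
  map_mul' ν ν' := by ext f i; simp [infty_coeFn_mul, mul_assoc]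
  map_zero' := by ext; simp
  map_add' ν ν' := by ext f i; simp [add_mul]
  commutes' z := by ext f i; simp

@[simp]
theorem mulAlgHom_apply (ν : ℓ^∞(ι, 𝕜)) : mulAlgHom ι 𝕜 p ν = mulCLM p ν := rfl

end lp

namespace HilbertBasis

variable {ι 𝕜 E : Type*} [RCLike 𝕜] [NormedAddCommGroup E] [InnerProductSpace 𝕜 E]
  (b : HilbertBasis ι 𝕜 E)

noncomputable def diagonalAlgHom : ℓ^∞(ι, 𝕜) →ₐ[𝕜] (E →L[𝕜] E) :=
  (b.repr.toContinuousLinearEquiv.conjContinuousAlgEquiv.symm.toAlgEquiv : _ →ₐ[𝕜] _).comp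
    (lp.mulAlgHom ι 𝕜 2)

theorem repr_diagonalAlgHom_apply (ν : ℓ^∞(ι, 𝕜)) (x : E) (i : ι) :
    b.repr (b.diagonalAlgHom ν x) i = ν i * b.repr x i := by
  simp [diagonalAlgHom]

theorem diagonalAlgHom_apply (ν : ℓ^∞(ι, 𝕜)) (x : E) :
    b.diagonalAlgHom ν x = ∑' i, (ν i * ⟪b i, x⟫_𝕜) • b i := by
  simp only [← b.repr_apply_apply, ← b.repr_diagonalAlgHom_apply]
  exact (b.hasSum_repr _).tsum_eq.symm

theorem diagonalAlgHom_apply_self (ν : ℓ^∞(ι, 𝕜)) (i : ι) :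
    b.diagonalAlgHom ν (b i) = ν i • b i := by
  classical
  refine b.repr.injective (lp.ext (funext fun j => ?_))
  rw [repr_diagonalAlgHom_apply, map_smul, b.repr_self]
  by_cases h : j = i <;> simp [lp.single_apply, h]

theorem spectrum_diagonalAlgHom [CompleteSpace E] (ν : ℓ^∞(ι, 𝕜)) :
    spectrum 𝕜 (b.diagonalAlgHom ν) = closure (Set.range ν) := by
  refine ((AlgHom.spectrum_apply_subset _ ν).trans
    (lp.spectrum_infty_subset_closure_range ν)).antisymm ?_
  refine closure_minimal ?_ (spectrum.isClosed _)
  rintro _ ⟨i, rfl⟩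
  rw [ContinuousLinearMap.spectrum_eq]
  exact (Module.End.hasEigenvalue_of_hasEigenvector
    ⟨Module.End.mem_eigenspace_iff.mpr (b.diagonalAlgHom_apply_self ν i),
      b.orthonormal.ne_zero i⟩).mem_spectrum

end HilbertBasis

/-- If `T` is a continuous linear operator on a complex Hilbert space acting
diagonally on a Hilbert basis `b` with bounded symbol `μ : ι → ℂ`, i.e.
`T η = ∑' i, μ i ⟨b i, η⟩ • b i`, then the spectrum of `T` is the closure of the range
of `μ`. -/
theorem stmt_3 {X : Type*} [NormedAddCommGroup X] [InnerProductSpace ℂ X] [CompleteSpace X]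
    {ι : Type*} (b : HilbertBasis ι ℂ X) (μ : ι → ℂ)
    (hμ : ∃ M : ℝ, ∀ i : ι, ‖μ i‖ ≤ M)
    (T : X →L[ℂ] X)
    (hT : ∀ η : X, T η = ∑' i : ι, (μ i * (inner ℂ (b i) η : ℂ)) • b i) :
    spectrum ℂ T = closure (Set.range μ) := by
  obtain ⟨M, hM⟩ := hμ
  let ν : ℓ^∞(ι, ℂ) := ⟨μ, memℓp_infty ⟨M, Set.forall_mem_range.mpr hM⟩⟩
  have hTν : T = b.diagonalAlgHom ν := by
    ext η
    rw [hT, b.diagonalAlgHom_apply]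
  rw [hTν, b.spectrum_diagonalAlgHom]
end

section
/- Let ι be a countable index type, let λ : ι → ℝ be such that the family i ↦ (λ i)² is summable, and let R > √(∑'_i (λ i)²). Let g : ℂ → ℂ be analytic on the open ball of radius R centered at 0 with g(0) = 0. Then the family i ↦ |g(λ i)|² is summable. -/
/-! Since `g 0 = 0`, the difference quotient `g z / z` extends continuously to `0`, so it is
bounded on the compact disc of radius `√(∑' i, (l i)²) < R`, which contains every `l i`.
Hence `‖g (l i)‖ ≤ C * |l i|`, and `∑ ‖g (l i)‖²` is dominated by `C² ∑ (l i)²`. -/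

open Metric

theorem IsCompact.exists_norm_sub_le_mul_norm_sub {𝕜 E : Type*} [NontriviallyNormedField 𝕜]
    [NormedAddCommGroup E] [NormedSpace 𝕜 E] {f : 𝕜 → E} {s : Set 𝕜} (hs : IsCompact s)
    {a : 𝕜} (hf : ∀ z ∈ s, DifferentiableAt 𝕜 f z) (ha : DifferentiableAt 𝕜 f a) :
    ∃ C, ∀ z ∈ s, ‖f z - f a‖ ≤ C * ‖z - a‖ := by
  have hcont : ContinuousOn (dslope f a) s := by
    intro z hz
    rcases eq_or_ne z a with rfl | hne
    · exact (continuousAt_dslope_same.2 ha).continuousWithinAt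
    · exact ((continuousAt_dslope_of_ne hne).2 (hf z hz).continuousAt).continuousWithinAt
  obtain ⟨C, hC⟩ := hs.exists_bound_of_continuousOn hcont
  refine ⟨C, fun z hz => ?_⟩
  calc ‖f z - f a‖ = ‖z - a‖ * ‖dslope f a z‖ := by rw [← sub_smul_dslope, norm_smul]
    _ ≤ ‖z - a‖ * C := by gcongr; exact hC z hz
    _ = C * ‖z - a‖ := mul_comm _ _

theorem abs_le_sqrt_tsum_sq {ι : Type*} {l : ι → ℝ} (hl : Summable fun i => l i ^ 2) (i : ι) :
    |l i| ≤ Real.sqrt (∑' j, l j ^ 2) := by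
  rw [← Real.sqrt_sq_eq_abs]
  exact Real.sqrt_le_sqrt (hl.le_tsum i fun j _ => sq_nonneg (l j))

theorem Summable.sq_norm_of_norm_le_mul_abs {ι E : Type*} [SeminormedAddCommGroup E]
    {l : ι → ℝ} {u : ι → E} (hl : Summable fun i => l i ^ 2) {C : ℝ}
    (hu : ∀ i, ‖u i‖ ≤ C * |l i|) : Summable fun i => ‖u i‖ ^ 2 := by
  refine (hl.mul_left (C ^ 2)).of_nonneg_of_le (fun i => sq_nonneg _) fun i => ?_
  calc ‖u i‖ ^ 2 ≤ (C * |l i|) ^ 2 := pow_le_pow_left₀ (norm_nonneg _) (hu i) 2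
    _ = C ^ 2 * l i ^ 2 := by rw [mul_pow, sq_abs]

theorem stmt_6_general {ι : Type*} (l : ι → ℝ)
    (hl : Summable fun i : ι => (l i) ^ 2) (R : ℝ)
    (hR : Real.sqrt (∑' i : ι, (l i) ^ 2) < R)
    (g : ℂ → ℂ) (hg : ∀ z ∈ Metric.ball (0 : ℂ) R, AnalyticAt ℂ g z)
    (hg0 : g 0 = 0) :
    Summable fun i : ι => ‖g (l i)‖ ^ 2 := by
  set S := Real.sqrt (∑' i : ι, (l i) ^ 2)
  have hdiff : ∀ z ∈ closedBall (0 : ℂ) S, DifferentiableAt ℂ g z := fun z hz =>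
    (hg z (closedBall_subset_ball hR hz)).differentiableAt
  have h0 : (0 : ℂ) ∈ closedBall 0 S := mem_closedBall_self (Real.sqrt_nonneg _)
  obtain ⟨C, hC⟩ :=
    (isCompact_closedBall (0 : ℂ) S).exists_norm_sub_le_mul_norm_sub hdiff (hdiff 0 h0)
  refine hl.sq_norm_of_norm_le_mul_abs (C := C) fun i => ?_
  have hli : (l i : ℂ) ∈ closedBall 0 S := by
    simpa [Complex.norm_real] using abs_le_sqrt_tsum_sq hl i
  simpa [hg0, Complex.norm_real] using hC _ hli

/-- If `ι` is countable, `i ↦ (l i)²` is summable, `R > √(∑' i, (l i)²)`,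
and `g : ℂ → ℂ` is analytic on the open ball of radius `R` about `0` with `g 0 = 0`,
then `i ↦ |g (l i)|²` is summable. (Scalar form of: holomorphic functions vanishing at `0`
map Hilbert–Schmidt self-adjoint operators to Hilbert–Schmidt operators.) -/
theorem stmt_6 {ι : Type*} [Countable ι] (l : ι → ℝ)
    (hl : Summable fun i : ι => (l i) ^ 2) (R : ℝ)
    (hR : Real.sqrt (∑' i : ι, (l i) ^ 2) < R)
    (g : ℂ → ℂ) (hg : ∀ z ∈ Metric.ball (0 : ℂ) R, AnalyticAt ℂ g z)
    (hg0 : g 0 = 0) :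
    Summable fun i : ι => ‖g (l i)‖ ^ 2 :=
  stmt_6_general l hl R hR g hg hg0
end

section
/- Let c > 0 and λ ∈ ℝ with λ ≤ min{c, 1}. Then for every t ∈ ℝ: |cos(t·√(c − λ)) − cos(t·√c)| ≤ (t²/(2c) + |t|/√c)·|λ|. -/
lemma abs_cos_sub_cos_le (x y : ℝ) : |Real.cos x - Real.cos y| ≤ |x - y| := by
  rw [Real.cos_sub_cos]
  calc |(-2) * Real.sin ((x + y) / 2) * Real.sin ((x - y) / 2)|
      = 2 * |Real.sin ((x + y) / 2)| * |Real.sin ((x - y) / 2)| := by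
        rw [abs_mul, abs_mul]; norm_num
    _ ≤ 2 * 1 * |(x - y) / 2| := by
        apply mul_le_mul
        · apply mul_le_mul_of_nonneg_left (Real.abs_sin_le_one _) (by norm_num)
        · exact Real.abs_sin_le_abs
        · positivity
        · positivity
    _ = |x - y| := by rw [abs_div, abs_two]; ring

/-- For `c > 0`, `l ≤ min c 1` and every real `t`,
`|cos(t√(c − l)) − cos(t√c)| ≤ (t²/(2c) + |t|/√c)·|l|`. -/
theorem stmt_7 (c l : ℝ) (hc : 0 < c) (hl : l ≤ min c 1) (t : ℝ) :
    |Real.cos (t * Real.sqrt (c - l)) - Real.cos (t * Real.sqrt c)| ≤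
      (t ^ 2 / (2 * c) + |t| / Real.sqrt c) * |l| := by
  have hcl : 0 ≤ c - l := by have := le_min_iff.1 hl; linarith [this.1]
  have hsc : 0 < Real.sqrt c := Real.sqrt_pos.2 hc
  have hkey : |Real.sqrt (c - l) - Real.sqrt c| ≤ |l| / Real.sqrt c := by
    have hsum : Real.sqrt c ≤ Real.sqrt (c - l) + Real.sqrt c := by
      have := Real.sqrt_nonneg (c - l); linarith
    have hprod : (Real.sqrt (c - l) - Real.sqrt c) * (Real.sqrt (c - l) + Real.sqrt c)
        = -l := by
      have h1 := Real.sq_sqrt hcl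
      have h2 := Real.sq_sqrt hc.le
      ring_nf
      nlinarith [h1, h2]
    have hsum0 : 0 ≤ Real.sqrt (c - l) + Real.sqrt c := by positivity
    rw [le_div_iff₀ hsc]
    calc |Real.sqrt (c - l) - Real.sqrt c| * Real.sqrt c
        ≤ |Real.sqrt (c - l) - Real.sqrt c| * (Real.sqrt (c - l) + Real.sqrt c) :=
          mul_le_mul_of_nonneg_left hsum (abs_nonneg _)
      _ = |(Real.sqrt (c - l) - Real.sqrt c) * (Real.sqrt (c - l) + Real.sqrt c)| := by
          rw [abs_mul, abs_of_nonneg hsum0]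
      _ = |l| := by rw [hprod, abs_neg]
  calc |Real.cos (t * Real.sqrt (c - l)) - Real.cos (t * Real.sqrt c)|
      ≤ |t * Real.sqrt (c - l) - t * Real.sqrt c| := abs_cos_sub_cos_le _ _
    _ = |t| * |Real.sqrt (c - l) - Real.sqrt c| := by rw [← mul_sub, abs_mul]
    _ ≤ |t| * (|l| / Real.sqrt c) := by
        exact mul_le_mul_of_nonneg_left hkey (abs_nonneg t)
    _ ≤ (t ^ 2 / (2 * c) + |t| / Real.sqrt c) * |l| := by
        rw [add_mul]
        have : |t| * (|l| / Real.sqrt c) = |t| / Real.sqrt c * |l| := by ring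
        rw [this]
        have : 0 ≤ t ^ 2 / (2 * c) * |l| := by positivity
        linarith
end

section
/- Let ι be a countable index type, c > 0, t ∈ ℝ, and λ : ι → ℝ be such that λ i < c and λ i ≤ 1 for every i and the family i ↦ (λ i)² is summable. Then the family i ↦ (sin(t·√(c − λ i))/√(c − λ i) − sin(t·√c)/√c)² is summable. -/
open Real

lemma key_lip (c : ℝ) (hc : 0 < c) (t : ℝ) {x : ℝ} (hx : |x| ≤ c/2) :
    |Real.sin (t * Real.sqrt (c - x)) / Real.sqrt (c - x) -
      Real.sin (t * Real.sqrt c) / Real.sqrt c|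
    ≤ (|t| / (2 * Real.sqrt (c/2) ^ 2) + 1 / (2 * Real.sqrt (c/2) ^ 3)) * |x| := by
  set a := Real.sqrt (c/2) with ha
  have ha0 : 0 < a := Real.sqrt_pos.mpr (by linarith)
  set C := |t| / (2 * a ^ 2) + 1 / (2 * a ^ 3) with hC
  set s : Set ℝ := Set.Icc (c/2) (3*c/2) with hs
  set f' : ℝ → ℝ := fun y =>
    Real.cos (t * Real.sqrt y) * (t * (1 / (2 * Real.sqrt y))) * (Real.sqrt y)⁻¹ +
      Real.sin (t * Real.sqrt y) * (-(1 / (2 * Real.sqrt y)) / (Real.sqrt y) ^ 2) with hf'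
  have habs := abs_le.mp hx
  have hmem : ∀ y ∈ s, 0 < y := fun y hy => lt_of_lt_of_le (by linarith) hy.1
  have hderiv : ∀ y ∈ s, HasDerivWithinAt
      (fun y => Real.sin (t * Real.sqrt y) * (Real.sqrt y)⁻¹) (f' y) s y := by
    intro y hy
    have hy0 : 0 < y := hmem y hy
    have hsq : HasDerivAt Real.sqrt (1 / (2 * Real.sqrt y)) y := Real.hasDerivAt_sqrt hy0.ne'
    have h1 : HasDerivAt (fun y => t * Real.sqrt y) (t * (1 / (2 * Real.sqrt y))) y :=
      hsq.const_mul t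
    have h2 := h1.sin
    have h3 : HasDerivAt (fun y => (Real.sqrt y)⁻¹)
        (-(1 / (2 * Real.sqrt y)) / (Real.sqrt y) ^ 2) y :=
      hsq.inv (Real.sqrt_ne_zero'.mpr hy0)
    exact (h2.mul h3).hasDerivWithinAt
  have hbound : ∀ y ∈ s, ‖f' y‖ ≤ C := by
    intro y hy
    have hy0 : 0 < y := hmem y hy
    have hay : a ≤ Real.sqrt y := Real.sqrt_le_sqrt hy.1
    have hsy : 0 < Real.sqrt y := lt_of_lt_of_le ha0 hay
    have hb1 : |Real.cos (t * Real.sqrt y) * (t * (1 / (2 * Real.sqrt y))) * (Real.sqrt y)⁻¹|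
        ≤ |t| / (2 * a ^ 2) := by
      rw [abs_mul, abs_mul]
      have h1 : |Real.cos (t * Real.sqrt y)| ≤ 1 := Real.abs_cos_le_one _
      have h2 : |t * (1 / (2 * Real.sqrt y))| ≤ |t| / (2 * a) := by
        rw [abs_mul, abs_of_nonneg (by positivity : (0:ℝ) ≤ 1 / (2 * Real.sqrt y))]
        rw [mul_one_div]
        gcongr
      have h3 : |(Real.sqrt y)⁻¹| ≤ a⁻¹ := by
        rw [abs_of_nonneg (by positivity)]
        exact inv_anti₀ ha0 hay
      calc |Real.cos (t * Real.sqrt y)| * |t * (1 / (2 * Real.sqrt y))| * |(Real.sqrt y)⁻¹|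
          ≤ 1 * (|t| / (2 * a)) * a⁻¹ := by
            gcongr <;> positivity
        _ = |t| / (2 * a ^ 2) := by rw [one_mul, ← div_eq_mul_inv, div_div, sq, ← mul_assoc]
    have hb2 : |Real.sin (t * Real.sqrt y) * (-(1 / (2 * Real.sqrt y)) / (Real.sqrt y) ^ 2)|
        ≤ 1 / (2 * a ^ 3) := by
      rw [abs_mul]
      have h1 : |Real.sin (t * Real.sqrt y)| ≤ 1 := Real.abs_sin_le_one _
      have h2 : |(-(1 / (2 * Real.sqrt y)) / (Real.sqrt y) ^ 2)| ≤ 1 / (2 * a ^ 3) := by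
        rw [abs_div, abs_neg, abs_of_nonneg (by positivity : (0:ℝ) ≤ 1 / (2 * Real.sqrt y)),
          abs_of_nonneg (by positivity : (0:ℝ) ≤ (Real.sqrt y) ^ 2)]
        rw [div_div]
        apply div_le_div_of_nonneg_left one_pos.le (by positivity)
        calc 2 * a ^ 3 = 2 * a * a ^ 2 := by ring
          _ ≤ 2 * Real.sqrt y * (Real.sqrt y) ^ 2 := by gcongr
      calc |Real.sin (t * Real.sqrt y)| * |(-(1 / (2 * Real.sqrt y)) / (Real.sqrt y) ^ 2)|
          ≤ 1 * (1 / (2 * a ^ 3)) := by gcongr <;> positivity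
        _ = 1 / (2 * a ^ 3) := one_mul _
    calc ‖f' y‖ ≤ |Real.cos (t * Real.sqrt y) * (t * (1 / (2 * Real.sqrt y))) * (Real.sqrt y)⁻¹|
          + |Real.sin (t * Real.sqrt y) * (-(1 / (2 * Real.sqrt y)) / (Real.sqrt y) ^ 2)| :=
        abs_add_le _ _
      _ ≤ C := add_le_add hb1 hb2
  have hconv : Convex ℝ s := convex_Icc _ _
  have hcs : c ∈ s := ⟨by linarith, by linarith⟩
  have hxs : c - x ∈ s := ⟨by linarith, by linarith⟩
  have := hconv.norm_image_sub_le_of_norm_hasDerivWithin_le hderiv hbound hcs hxs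
  simpa [div_eq_mul_inv, Real.norm_eq_abs, abs_sub_comm x 0, sub_sub_cancel_left, abs_neg]
    using this

set_option maxHeartbeats 1000000 in
/-- If `ι` is countable, `c > 0`, `t ∈ ℝ`, `l i < c` and `l i ≤ 1` for all
`i`, and `i ↦ (l i)²` is summable, then
`i ↦ (sin(t√(c − l i))/√(c − l i) − sin(t√c)/√c)²` is summable. -/
theorem stmt_10 {ι : Type*} [Countable ι] (c : ℝ) (hc : 0 < c) (t : ℝ)
    (l : ι → ℝ) (hlc : ∀ i : ι, l i < c) (hl1 : ∀ i : ι, l i ≤ 1)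
    (hsum : Summable fun i : ι => (l i) ^ 2) :
    Summable fun i : ι =>
      (Real.sin (t * Real.sqrt (c - l i)) / Real.sqrt (c - l i) -
        Real.sin (t * Real.sqrt c) / Real.sqrt c) ^ 2 := by
  set C := |t| / (2 * Real.sqrt (c/2) ^ 2) + 1 / (2 * Real.sqrt (c/2) ^ 3) with hC
  have hC0 : 0 ≤ C := by positivity
  -- l i → 0 along cofinite
  have hl0 : Filter.Tendsto (fun i => |l i|) Filter.cofinite (nhds 0) := by
    have h1 : Filter.Tendsto (fun i => (l i) ^ 2) Filter.cofinite (nhds 0) :=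
      hsum.tendsto_cofinite_zero
    have h2 := (Real.continuous_sqrt.tendsto 0).comp h1
    simpa [Function.comp_def, Real.sqrt_sq_eq_abs] using h2
  have hev : ∀ᶠ i in Filter.cofinite, |l i| ≤ c / 2 :=
    (hl0.eventually_lt_const (by linarith : (0:ℝ) < c / 2)).mono fun i h => h.le
  have hfin : {i | ¬ |l i| ≤ c / 2}.Finite := Filter.eventually_cofinite.mp hev
  rw [← hfin.summable_compl_iff]
  refine Summable.of_nonneg_of_le (fun i => sq_nonneg _) (fun i => ?_)
    ((hsum.mul_left (C ^ 2)).subtype _)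
  · simp only [Function.comp_apply]
    have hi : |l (i : ι)| ≤ c / 2 := not_not.mp i.2
    have hb := key_lip c hc t hi
    have := pow_le_pow_left₀ (abs_nonneg _) hb 2
    calc (Real.sin (t * Real.sqrt (c - l i)) / Real.sqrt (c - l i) -
          Real.sin (t * Real.sqrt c) / Real.sqrt c) ^ 2
        = |Real.sin (t * Real.sqrt (c - l i)) / Real.sqrt (c - l i) -
          Real.sin (t * Real.sqrt c) / Real.sqrt c| ^ 2 := (sq_abs _).symm
      _ ≤ (C * |l (i : ι)|) ^ 2 := this
      _ = C ^ 2 * (l i) ^ 2 := by rw [mul_pow, sq_abs]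
end

section
/- Let n ≥ 1, let Ω ⊆ ℝⁿ be nonempty, bounded and open, and let Ω̂ ⊆ ℝⁿ be bounded open with closure(Ω) ⊆ Ω̂. Let (b_i)_{i∈ι} be a Hilbert basis of L²(Ω, ℂ), and suppose for each i there is a bounded continuous function ĥ_i : Ω̂ → ℂ with ‖ĥ_i‖_∞ ≤ K (for a fixed constant K > 0) whose restriction to Ω equals b_i almost everywhere. Let f : ι → ℂ be such that the family i ↦ |f i|² is summable, and let u ∈ L²(Ω, ℂ). Then the family i ↦ (f i · ⟨b_i, u⟩) • ĥ_i is summable in the Banach space of bounded continuous functions on Ω̂ equipped with the supremum norm. -/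
open MeasureTheory

/-! Bessel's inequality makes `⟨b i, u⟩` square summable, so `f i * ⟨b i, u⟩` is absolutely
summable, by `|a c| ≤ (a² + c²) / 2`, and with `‖h i‖ ≤ K` the family converges absolutely in the
Banach space of bounded continuous functions. -/

theorem summable_mul_of_summable_sq {ι : Type*} {a c : ι → ℝ}
    (ha : Summable fun i => a i ^ 2) (hc : Summable fun i => c i ^ 2) :
    Summable fun i => a i * c i := by
  refine Summable.of_norm_bounded ((ha.add hc).div_const 2) fun i => ?_
  rw [Real.norm_eq_abs, abs_mul, le_div_iff₀ two_pos, ← sq_abs (a i), ← sq_abs (c i)]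
  nlinarith [two_mul_le_add_sq |a i| |c i|]

theorem summable_mul_smul_of_summable_sq_of_norm_le {ι 𝕜 E : Type*} [NormedField 𝕜]
    [NormedAddCommGroup E] [NormedSpace 𝕜 E] [CompleteSpace E] {a c : ι → 𝕜} {g : ι → E}
    {K : ℝ} (ha : Summable fun i => ‖a i‖ ^ 2) (hc : Summable fun i => ‖c i‖ ^ 2)
    (hg : ∀ i, ‖g i‖ ≤ K) :
    Summable fun i => (a i * c i) • g i := by
  refine Summable.of_norm_bounded ((summable_mul_of_summable_sq ha hc).mul_right K) fun i => ?_
  rw [norm_smul, norm_mul]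
  exact mul_le_mul_of_nonneg_left (hg i) (by positivity)

theorem stmt_11_general {n : ℕ}
    (Ω Ωh : Set (EuclideanSpace ℝ (Fin n)))
    {ι : Type*} (b : HilbertBasis ι ℂ (Lp ℂ 2 (volume.restrict Ω)))
    (K : ℝ)
    (h : ι → BoundedContinuousFunction Ωh ℂ)
    (hhK : ∀ i : ι, ‖h i‖ ≤ K)
    (f : ι → ℂ) (hf : Summable fun i : ι => ‖f i‖ ^ 2)
    (u : Lp ℂ 2 (volume.restrict Ω)) :
    Summable fun i : ι => (f i * (inner ℂ (b i) u : ℂ)) • h i :=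
  summable_mul_smul_of_summable_sq_of_norm_le hf (b.orthonormal.inner_products_summable (x := u)) hhK

/-- Let `Ω ⊆ ℝⁿ` (`n ≥ 1`) be nonempty, bounded and open, and `Ω̂` bounded
open with `closure Ω ⊆ Ω̂`. Let `b` be a Hilbert basis of `L²(Ω, ℂ)` such that each `b i`
agrees a.e. on `Ω` with a bounded continuous function `h i : Ω̂ → ℂ` of sup norm at most a
fixed `K > 0`. If `i ↦ |f i|²` is summable and `u ∈ L²(Ω, ℂ)`, then the family
`i ↦ (f i · ⟨b i, u⟩) • h i` is summable in the Banach space of bounded continuous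
functions on `Ω̂` with the sup norm. -/
theorem stmt_11 {n : ℕ} (hn : 1 ≤ n)
    (Ω Ωh : Set (EuclideanSpace ℝ (Fin n)))
    (hΩne : Ω.Nonempty) (hΩo : IsOpen Ω) (hΩb : Bornology.IsBounded Ω)
    (hΩho : IsOpen Ωh) (hΩhb : Bornology.IsBounded Ωh)
    (hsub : closure Ω ⊆ Ωh)
    {ι : Type*} (b : HilbertBasis ι ℂ (Lp ℂ 2 (volume.restrict Ω)))
    (K : ℝ) (hK : 0 < K)
    (h : ι → BoundedContinuousFunction Ωh ℂ)
    (hhK : ∀ i : ι, ‖h i‖ ≤ K)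
    (hae : ∀ i : ι, ∀ᵐ x ∂(volume.restrict Ω), ∀ hx : x ∈ Ωh, b i x = h i ⟨x, hx⟩)
    (f : ι → ℂ) (hf : Summable fun i : ι => ‖f i‖ ^ 2)
    (u : Lp ℂ 2 (volume.restrict Ω)) :
    Summable fun i : ι => (f i * (inner ℂ (b i) u : ℂ)) • h i :=
  stmt_11_general Ω Ωh b K h hhK f hf u
end

section
/- Let I and Î be nonempty open intervals of ℝ with closure(I) ⊆ Î, Î bounded. Let (b_i)_{i∈ι} be a Hilbert basis of L²(I, ℂ), and suppose for each i there is a continuously differentiable function ê_i : Î → ℂ, with ê_i and its derivative ê_i′ bounded, whose restriction to I equals b_i almost everywhere. Let f : ι → ℂ be such that the families i ↦ |f i|² and i ↦ (‖ê_i′‖_∞ · |f i|)² are summable, and let u ∈ L²(I, ℂ). Then the family i ↦ (f i · ⟨b_i, u⟩) • ê_i′ is summable in the Banach space of bounded continuous functions on Î equipped with the supremum norm. -/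
open MeasureTheory

/-! By Bessel's inequality the coefficients `⟪B i, u⟫` are square-summable, so by AM-GM the
norms `‖e' i‖ ‖f i‖ ‖⟪B i, u⟫‖` of the terms are summable, and absolutely summable families
in the Banach space of bounded continuous functions are summable. -/

theorem summable_mul_of_summable_sq_s12 {ι : Type*} {x y : ι → ℝ}
    (hx : Summable fun i => x i ^ 2) (hy : Summable fun i => y i ^ 2) :
    Summable fun i => x i * y i :=
  Summable.of_norm_bounded ((hx.add hy).div_const 2) fun i => by
    rw [Real.norm_eq_abs, abs_mul, ← sq_abs (x i), ← sq_abs (y i)]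
    linarith [two_mul_le_add_sq |x i| |y i|]

theorem stmt_12_general (a b ah bh : ℝ)
    {ι : Type*}
    (B : HilbertBasis ι ℂ (Lp ℂ 2 (volume.restrict (Set.Ioo a b))))
    (e' : ι → BoundedContinuousFunction (Set.Ioo ah bh) ℂ)
    (f : ι → ℂ)
    (hf2 : Summable fun i : ι => (‖e' i‖ * ‖f i‖) ^ 2)
    (u : Lp ℂ 2 (volume.restrict (Set.Ioo a b))) :
    Summable fun i : ι => (f i * (inner ℂ (B i) u : ℂ)) • e' i := by
  have hbessel : Summable fun i : ι => ‖(inner ℂ (B i) u : ℂ)‖ ^ 2 :=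
    B.orthonormal.inner_products_summable u
  refine Summable.of_norm ?_
  simp only [norm_smul, norm_mul]
  convert summable_mul_of_summable_sq_s12 hf2 hbessel using 2 with i
  ring

/-- Let `I = (a,b)` and `Î = (â,b̂)` be nonempty open intervals with
`closure I ⊆ Î` (`Î` bounded). Let `B` be a Hilbert basis of `L²(I, ℂ)` such that each
`B i` agrees a.e. on `I` with a function `e i` that is continuously differentiable on `Î`
with bounded derivative given by the bounded continuous function `e' i` on `Î` (and `e i`
itself bounded on `Î`). If `i ↦ |f i|²` and `i ↦ (‖e' i‖_∞ · |f i|)²` are summable and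
`u ∈ L²(I, ℂ)`, then `i ↦ (f i · ⟨B i, u⟩) • e' i` is summable in the Banach space of
bounded continuous functions on `Î` with the sup norm. -/
theorem stmt_12 (a b ah bh : ℝ) (hab : a < b) (ha : ah < a) (hb : b < bh)
    {ι : Type*}
    (B : HilbertBasis ι ℂ (Lp ℂ 2 (volume.restrict (Set.Ioo a b))))
    (e : ι → ℝ → ℂ)
    (e' : ι → BoundedContinuousFunction (Set.Ioo ah bh) ℂ)
    (hext : ∀ i : ι, ∀ᵐ x ∂(volume.restrict (Set.Ioo a b)), B i x = e i x)
    (hderiv : ∀ (i : ι) (x : ℝ) (hx : x ∈ Set.Ioo ah bh),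
      HasDerivAt (e i) (e' i ⟨x, hx⟩) x)
    (hbd : ∀ i : ι, ∃ M : ℝ, ∀ x ∈ Set.Ioo ah bh, ‖e i x‖ ≤ M)
    (f : ι → ℂ)
    (hf1 : Summable fun i : ι => ‖f i‖ ^ 2)
    (hf2 : Summable fun i : ι => (‖e' i‖ * ‖f i‖) ^ 2)
    (u : Lp ℂ 2 (volume.restrict (Set.Ioo a b))) :
    Summable fun i : ι => (f i * (inner ℂ (B i) u : ℂ)) • e' i :=
  stmt_12_general a b ah bh B e' f hf2 u
end

section
/- Work in L²((−1,1), ℂ) with inner product ⟨g, h⟩ = ∫_{−1}^{1} conj(g)·h. Let e_k^p(x) := (1/√2)·exp(iπkx) for k ∈ ℤ (the periodic Hilbert basis), and let e_0^N(x) := 1/√2 and e_k^N(x) := cos((kπ/2)(x + 1)) for integers k ≥ 1 (the Neumann cosine Hilbert basis). Let C ∈ L²((−1,1)) be real-valued and even, and let u ∈ L²((−1,1), ℂ) be even (u(−x) = u(x) a.e.). Then, with equality in L²: ∑'_{k∈ℤ} ⟨e_k^p, C⟩·⟨e_k^p, u⟩ • e_k^p = ∑'_{k∈ℕ} ⟨e_k^p,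 C⟩·⟨e_{2k}^N, u⟩ • e_{2k}^N. -/
/-!
An even function has the same coefficient against `e_k^p` and against `e_{-k}^p`, and for `k ≥ 1`
the Neumann mode `e_{2k}^N(x) = cos(kπx + kπ) = (-1)^k (e_k^p + e_{-k}^p)(x) / √2` lies in the span
of that pair. Hence the `k`-th and `(-k)`-th terms of the periodic series merge into the single term
along `e_{2k}^N`, while `e_0^N = e_0^p` takes care of `k = 0`.
-/

open MeasureTheory Set Complex
open scoped InnerProductSpace ComplexConjugate

theorem HasSum.nat_of_add_neg {M : Type*} [AddCommGroup M] [TopologicalSpace M]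
    [IsTopologicalAddGroup M] {f : ℤ → M} {g : ℕ → M} {a : M} (hf : HasSum f a)
    (hg₀ : g 0 = f 0) (hg : ∀ n, n ≠ 0 → g n = f n + f (-n)) : HasSum g a := by
  convert hf.nat_add_neg.update 0 (f 0) using 1
  · funext n
    rcases eq_or_ne n 0 with rfl | hn
    · simp [hg₀]
    · simp [hn, hg n hn]
  · simp

theorem HilbertBasis.summable_inner_mul_inner_smul {ι 𝕜 E : Type*} [RCLike 𝕜]
    [NormedAddCommGroup E] [InnerProductSpace 𝕜 E] (b : HilbertBasis ι 𝕜 E) (x y : E) :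
    Summable fun i => (⟪b i, x⟫_𝕜 * ⟪b i, y⟫_𝕜) • b i := by
  have hbound (i : ι) : ‖⟪b i, x⟫_𝕜 * ⟪b i, y⟫_𝕜‖ ^ 2 ≤ ‖y‖ ^ 2 * ‖⟪b i, x⟫_𝕜‖ ^ 2 := by
    have hy : ‖⟪b i, y⟫_𝕜‖ ≤ ‖y‖ := by
      simpa [b.orthonormal.1 i] using norm_inner_le_norm (𝕜 := 𝕜) (b i) y
    rw [norm_mul, mul_pow, mul_comm]
    gcongr
  have hmem : Memℓp (fun i => ⟪b i, x⟫_𝕜 * ⟪b i, y⟫_𝕜) 2 := by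
    refine memℓp_gen ?_
    simp only [ENNReal.toReal_ofNat, Real.rpow_two]
    exact .of_nonneg_of_le (fun _ => by positivity) hbound
      ((Orthonormal.inner_products_summable x b.orthonormal).mul_left _)
  exact (b.hasSum_repr_symm ⟨_, hmem⟩).summable

theorem inner_smul_add_smul_eq {E : Type*} [NormedAddCommGroup E] [InnerProductSpace ℂ E]
    {e e' w v : E} {c : ℂ} (hc : conj c * c = 2⁻¹) (hw : ⟪e', w⟫_ℂ = ⟪e, w⟫_ℂ)
    (hv : ⟪e', v⟫_ℂ = ⟪e, v⟫_ℂ) :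
    (⟪e, w⟫_ℂ * ⟪c • (e + e'), v⟫_ℂ) • c • (e + e')
      = (⟪e, w⟫_ℂ * ⟪e, v⟫_ℂ) • e + (⟪e', w⟫_ℂ * ⟪e', v⟫_ℂ) • e' := by
  rw [inner_smul_left, inner_add_left, hv, hw, smul_smul, smul_add]
  congr 2 <;> linear_combination (2 * ⟪e, w⟫_ℂ * ⟪e, v⟫_ℂ) * hc

theorem integral_comp_neg_Ioo {E : Type*} [NormedAddCommGroup E] [NormedSpace ℝ E]
    (a : ℝ) (f : ℝ → E) : ∫ x in Ioo (-a) a, f (-x) = ∫ x in Ioo (-a) a, f x := by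
  rcases le_total (-a) a with h | h
  · simp only [← integral_Ioc_eq_integral_Ioo, ← intervalIntegral.integral_of_le h,
      intervalIntegral.integral_comp_neg, neg_neg]
  · simp [Ioo_eq_empty h.not_gt]

theorem L2.inner_eq_of_ae_eq_comp_neg {a : ℝ} {f g v : Lp ℂ 2 (volume.restrict (Ioo (-a) a))}
    {φ : ℝ → ℂ} (hf : f =ᵐ[volume.restrict (Ioo (-a) a)] φ)
    (hg : g =ᵐ[volume.restrict (Ioo (-a) a)] fun x => φ (-x))
    (hv : ∀ᵐ x ∂(volume.restrict (Ioo (-a) a)), v (-x) = v x) :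
    ⟪g, v⟫_ℂ = ⟪f, v⟫_ℂ := by
  rw [L2.inner_def, L2.inner_def]
  calc ∫ x in Ioo (-a) a, ⟪g x, v x⟫_ℂ
      = ∫ x in Ioo (-a) a, (fun y => ⟪φ y, v y⟫_ℂ) (-x) :=
        integral_congr_ae (by filter_upwards [hg, hv] with x hgx hvx; simp [hgx, hvx])
    _ = ∫ x in Ioo (-a) a, ⟪φ x, v x⟫_ℂ := integral_comp_neg_Ioo a fun y => ⟪φ y, v y⟫_ℂ
    _ = ∫ x in Ioo (-a) a, ⟪f x, v x⟫_ℂ :=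
        integral_congr_ae (by filter_upwards [hf] with x hfx; simp [hfx])

noncomputable def periodicMode (k : ℤ) (x : ℝ) : ℂ :=
  (Real.sqrt 2 : ℂ)⁻¹ * exp (I * Real.pi * k * x)

theorem periodicMode_neg (k : ℤ) (x : ℝ) : periodicMode (-k) x = periodicMode k (-x) := by
  simp only [periodicMode, Int.cast_neg, ofReal_neg]
  ring_nf

theorem cos_two_mul_nat_mul_pi_div_two_mul_add_one (k : ℕ) (x : ℝ) :
    (Real.cos ((2 * k : ℕ) * Real.pi / 2 * (x + 1)) : ℂ)
      = ((-1) ^ k * (Real.sqrt 2 : ℂ)⁻¹) * (periodicMode k x + periodicMode (-k) x) := by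
  have hsqrt : (Real.sqrt 2 : ℂ)⁻¹ * (Real.sqrt 2 : ℂ)⁻¹ = 2⁻¹ := by
    rw [← mul_inv, ← ofReal_mul, Real.mul_self_sqrt zero_le_two, ofReal_ofNat]
  have hangle : ((2 * k : ℕ) : ℝ) * Real.pi / 2 * (x + 1) = k * Real.pi * x + k * Real.pi := by
    push_cast
    ring
  have hexp : exp (I * Real.pi * k * x) + exp (I * Real.pi * (-k) * x)
      = 2 * cos (k * Real.pi * x) := by
    rw [two_cos]
    ring_nf
  rw [hangle, Real.cos_add_nat_mul_pi]
  simp only [periodicMode, Int.cast_neg, Int.cast_natCast]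
  push_cast
  linear_combination (-1 : ℂ) ^ k *
    (-((Real.sqrt 2 : ℂ)⁻¹ * (Real.sqrt 2 : ℂ)⁻¹ * hexp) - 2 * cos (k * Real.pi * x) * hsqrt)

local notation "μ₁" => volume.restrict (Ioo (-1 : ℝ) 1)

section Bases

variable {ep : HilbertBasis ℤ ℂ (Lp ℂ 2 μ₁)} {eN : HilbertBasis ℕ ℂ (Lp ℂ 2 μ₁)}

theorem inner_periodic_neg_of_even (hep : ∀ k : ℤ, (ep k : ℝ → ℂ) =ᵐ[μ₁] periodicMode k)
    {v : Lp ℂ 2 μ₁} (hv : ∀ᵐ x ∂μ₁, v (-x) = v x) (k : ℤ) : ⟪ep (-k), v⟫_ℂ = ⟪ep k, v⟫_ℂ :=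
  L2.inner_eq_of_ae_eq_comp_neg (hep k)
    (by filter_upwards [hep (-k)] with x hx; rw [hx, periodicMode_neg]) hv

theorem neumann_zero_eq (hep : ∀ k : ℤ, (ep k : ℝ → ℂ) =ᵐ[μ₁] periodicMode k)
    (heN0 : (eN 0 : ℝ → ℂ) =ᵐ[μ₁] fun _ : ℝ => (Real.sqrt 2 : ℂ)⁻¹) : eN 0 = ep 0 := by
  refine Lp.ext ?_
  filter_upwards [heN0, hep 0] with x hN hp
  simp [hN, hp, periodicMode]

theorem neumann_two_mul_eq (hep : ∀ k : ℤ, (ep k : ℝ → ℂ) =ᵐ[μ₁] periodicMode k)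
    (heN : ∀ k : ℕ, k ≠ 0 → (eN k : ℝ → ℂ) =ᵐ[μ₁]
      fun x : ℝ => (Real.cos ((k : ℝ) * Real.pi / 2 * (x + 1)) : ℂ))
    {k : ℕ} (hk : k ≠ 0) :
    eN (2 * k) = ((-1) ^ k * (Real.sqrt 2 : ℂ)⁻¹) • (ep k + ep (-k)) := by
  refine Lp.ext ?_
  filter_upwards [heN (2 * k) (by positivity), Lp.coeFn_smul ((-1) ^ k * (Real.sqrt 2 : ℂ)⁻¹)
    (ep k + ep (-k)), Lp.coeFn_add (ep k) (ep (-k)), hep k, hep (-k)] with x hN hsmul hadd hpos hneg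
  rw [hN, hsmul, Pi.smul_apply, hadd, Pi.add_apply, hpos, hneg, smul_eq_mul,
    cos_two_mul_nat_mul_pi_div_two_mul_add_one]

end Bases

theorem stmt_15_general
    (ep : HilbertBasis ℤ ℂ (Lp ℂ 2 (volume.restrict (Set.Ioo (-1 : ℝ) 1))))
    (hep : ∀ k : ℤ, (ep k : ℝ → ℂ) =ᵐ[volume.restrict (Set.Ioo (-1 : ℝ) 1)]
      fun x : ℝ => (Real.sqrt 2 : ℂ)⁻¹ * Complex.exp (Complex.I * Real.pi * (k : ℂ) * (x : ℂ)))
    (eN : HilbertBasis ℕ ℂ (Lp ℂ 2 (volume.restrict (Set.Ioo (-1 : ℝ) 1))))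
    (heN0 : (eN 0 : ℝ → ℂ) =ᵐ[volume.restrict (Set.Ioo (-1 : ℝ) 1)]
      fun _ : ℝ => (Real.sqrt 2 : ℂ)⁻¹)
    (heN : ∀ k : ℕ, k ≠ 0 → (eN k : ℝ → ℂ) =ᵐ[volume.restrict (Set.Ioo (-1 : ℝ) 1)]
      fun x : ℝ => (Real.cos ((k : ℝ) * Real.pi / 2 * (x + 1)) : ℂ))
    (C u : Lp ℂ 2 (volume.restrict (Set.Ioo (-1 : ℝ) 1)))
    (hCeven : ∀ᵐ x ∂(volume.restrict (Set.Ioo (-1 : ℝ) 1)), C (-x) = C x)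
    (hueven : ∀ᵐ x ∂(volume.restrict (Set.Ioo (-1 : ℝ) 1)), u (-x) = u x) :
    (∑' k : ℤ, ((inner ℂ (ep k) C : ℂ) * (inner ℂ (ep k) u : ℂ)) • ep k)
      = ∑' k : ℕ, ((inner ℂ (ep (k : ℤ)) C : ℂ) * (inner ℂ (eN (2 * k)) u : ℂ)) • eN (2 * k) := by
  have hc (k : ℕ) : conj ((-1) ^ k * (Real.sqrt 2 : ℂ)⁻¹) * ((-1) ^ k * (Real.sqrt 2 : ℂ)⁻¹)
      = 2⁻¹ := by
    rw [conj_mul']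
    simp [← ofReal_pow]
  refine ((ep.summable_inner_mul_inner_smul C u).hasSum.nat_of_add_neg ?_ ?_).tsum_eq.symm
  · simp [neumann_zero_eq hep heN0]
  · intro k hk
    rw [neumann_two_mul_eq hep heN hk]
    exact inner_smul_add_smul_eq (hc k) (inner_periodic_neg_of_even hep hCeven k)
      (inner_periodic_neg_of_even hep hueven k)

/-- In `L²((−1,1), ℂ)`, let `ep` be the periodic Hilbert basis
(`ep k = (1/√2)e^{iπkx}`, `k ∈ ℤ`) and `eN` the Neumann cosine Hilbert basis
(`eN 0 = 1/√2`, `eN k = cos((kπ/2)(x+1))` for `k ≥ 1`). If `C` is real-valued and even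
and `u` is even, then
`∑'_{k∈ℤ} ⟨ep k, C⟩⟨ep k, u⟩ • ep k = ∑'_{k∈ℕ} ⟨ep k, C⟩⟨eN (2k), u⟩ • eN (2k)`. -/
theorem stmt_15
    (ep : HilbertBasis ℤ ℂ (Lp ℂ 2 (volume.restrict (Set.Ioo (-1 : ℝ) 1))))
    (hep : ∀ k : ℤ, (ep k : ℝ → ℂ) =ᵐ[volume.restrict (Set.Ioo (-1 : ℝ) 1)]
      fun x : ℝ => (Real.sqrt 2 : ℂ)⁻¹ * Complex.exp (Complex.I * Real.pi * (k : ℂ) * (x : ℂ)))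
    (eN : HilbertBasis ℕ ℂ (Lp ℂ 2 (volume.restrict (Set.Ioo (-1 : ℝ) 1))))
    (heN0 : (eN 0 : ℝ → ℂ) =ᵐ[volume.restrict (Set.Ioo (-1 : ℝ) 1)]
      fun _ : ℝ => (Real.sqrt 2 : ℂ)⁻¹)
    (heN : ∀ k : ℕ, k ≠ 0 → (eN k : ℝ → ℂ) =ᵐ[volume.restrict (Set.Ioo (-1 : ℝ) 1)]
      fun x : ℝ => (Real.cos ((k : ℝ) * Real.pi / 2 * (x + 1)) : ℂ))
    (C u : Lp ℂ 2 (volume.restrict (Set.Ioo (-1 : ℝ) 1)))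
    (hCreal : ∀ᵐ x ∂(volume.restrict (Set.Ioo (-1 : ℝ) 1)), (C x).im = 0)
    (hCeven : ∀ᵐ x ∂(volume.restrict (Set.Ioo (-1 : ℝ) 1)), C (-x) = C x)
    (hueven : ∀ᵐ x ∂(volume.restrict (Set.Ioo (-1 : ℝ) 1)), u (-x) = u x) :
    (∑' k : ℤ, ((inner ℂ (ep k) C : ℂ) * (inner ℂ (ep k) u : ℂ)) • ep k)
      = ∑' k : ℕ, ((inner ℂ (ep (k : ℤ)) C : ℂ) * (inner ℂ (eN (2 * k)) u : ℂ)) • eN (2 * k) :=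
  stmt_15_general ep hep eN heN0 heN C u hCeven hueven
end

section
/- Let k ∈ ℕ and z ∈ ℂ. Then the generalized hypergeometric series ₀F₁(−; k + 1/2; z) := ∑'_{l∈ℕ} z^l / ((k + 1/2)_l · l!) and ₀F₁(−; k + 3/2; z) := ∑'_{l∈ℕ} z^l / ((k + 3/2)_l · l!) satisfy the bounds |₀F₁(−; k + 1/2; z)| ≤ exp(2|z|) and |₀F₁(−; k + 3/2; z)| ≤ exp(2|z|/3). -/
/-- The generalized hypergeometric function `₀F₁(−; q; z) = ∑_{l} z^l / ((q)_l · l!)`,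
where `(q)_l` is the Pochhammer (rising factorial) symbol. -/
noncomputable def hyp0F1 (q : ℝ) (z : ℂ) : ℂ :=
  ∑' l : ℕ, z ^ l / ((((ascPochhammer ℝ l).eval q * (l.factorial : ℝ) : ℝ)) : ℂ)

/-!
For `0 < c ≤ q` every factor of `(q)_l = q (q + 1) ⋯ (q + l - 1)` is at least `c`, so
`(q)_l ≥ c^l` and the series of `₀F₁(−; q; z)` is dominated termwise by the exponential series
of `‖z‖ / c`. Taking `c = 1/2` and `c = 3/2` gives the two bounds.
-/

lemma pow_le_ascPochhammer_eval {c q : ℝ} (hc : 0 ≤ c) (hcq : c ≤ q) (l : ℕ) :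
    c ^ l ≤ (ascPochhammer ℝ l).eval q := by
  induction l with
  | zero => simp
  | succ n ih =>
    rw [ascPochhammer_succ_eval, pow_succ]
    have hc_le : c ≤ q + n := hcq.trans (le_add_of_nonneg_right n.cast_nonneg)
    exact mul_le_mul ih hc_le hc ((pow_nonneg hc n).trans ih)

lemma norm_hyp0F1_term_le {c q : ℝ} (hc : 0 < c) (hcq : c ≤ q) (z : ℂ) (l : ℕ) :
    ‖z ^ l / ((((ascPochhammer ℝ l).eval q * (l.factorial : ℝ) : ℝ)) : ℂ)‖
      ≤ (‖z‖ / c) ^ l / (l.factorial : ℝ) := by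
  have hpoch : c ^ l ≤ (ascPochhammer ℝ l).eval q := pow_le_ascPochhammer_eval hc.le hcq l
  have hfact : (0 : ℝ) < l.factorial := by positivity
  rw [norm_div, norm_pow, Complex.norm_real, Real.norm_of_nonneg
    (by positivity [ascPochhammer_pos l q (hc.trans_le hcq)]), div_pow, div_div]
  gcongr

lemma norm_hyp0F1_le_exp {c q : ℝ} (hc : 0 < c) (hcq : c ≤ q) (z : ℂ) :
    ‖hyp0F1 q z‖ ≤ Real.exp (‖z‖ / c) := by
  rw [Real.exp_eq_exp_ℝ, NormedSpace.exp_eq_tsum_div]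
  exact tsum_of_norm_bounded (Real.summable_pow_div_factorial _).hasSum
    (norm_hyp0F1_term_le hc hcq z)

/-- For `k ∈ ℕ` and `z ∈ ℂ`,
`|₀F₁(−; k + 1/2; z)| ≤ exp(2|z|)` and `|₀F₁(−; k + 3/2; z)| ≤ exp(2|z|/3)`. -/
theorem stmt_19 (k : ℕ) (z : ℂ) :
    ‖hyp0F1 ((k : ℝ) + 1 / 2) z‖ ≤ Real.exp (2 * ‖z‖) ∧
      ‖hyp0F1 ((k : ℝ) + 3 / 2) z‖ ≤ Real.exp (2 * ‖z‖ / 3) := by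
  have hk : (0 : ℝ) ≤ k := k.cast_nonneg
  constructor
  · convert norm_hyp0F1_le_exp (c := 1 / 2) (q := k + 1 / 2) (by norm_num) (by linarith) z using 2
    ring
  · convert norm_hyp0F1_le_exp (c := 3 / 2) (q := k + 3 / 2) (by norm_num) (by linarith) z using 2
    ring
end
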